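/- arXiv:2002.03069 — 5 statements merged into one kernel-verified Lean document; each statement's English description precedes it below -/
import Mathlib

section
/- Let X and A be nonempty finite sets, let P : X × A → (X → ℝ) be a transition kernel (P(x'|x,a) ≥ 0 and Σ_{x'} P(x'|x,a) = 1 for all x, a), and let r : X × A → ℝ. Let π and π̂ be policies (π(a|x) ≥ 0, Σ_a π(a|x) = 1, and similarly for π̂). Let μ : X → ℝ be a probability distribution (μ(x) ≥ 0, Σ_x μ(x) = 1) that is stationary for π, i.e., Σ_{x,a} μ(x)·π(a|x)·P(x'|x,a) = μ(x') for all x' ∈ X, and set λ = Σ_{x,a} μ(x)·π(a|x)·r(x,a). Suppose λ̂ ∈ ℝ and Q̂, V̂ satisfy the Bellman equations for π̂: Q̂(x,a) = r(x,a) − λ̂ + Σ_{x'} P(x'|x,a)·V̂(x') and V̂(x) = Σ_a π̂(a|x)·Q̂(x,a) for all x, a. Then λ − λ̂ = Σ_{x,a} μ(x)·(π(a|x) − π̂(a|x))·Q̂(x,a). -/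
/-- Performance difference lemma for average-reward MDPs. -/
theorem stmt5 (X A : Type*) [Fintype X] [Fintype A] [Nonempty X] [Nonempty A]
    -- transition kernel
    (P : X → A → X → ℝ)
    (hPnn : ∀ x a x', 0 ≤ P x a x') (hPsum : ∀ x a, ∑ x', P x a x' = 1)
    -- reward
    (r : X → A → ℝ)
    -- policies π and π̂
    (π πh : X → A → ℝ)
    (hπnn : ∀ x a, 0 ≤ π x a) (hπsum : ∀ x, ∑ a, π x a = 1)
    (hπhnn : ∀ x a, 0 ≤ πh x a) (hπhsum : ∀ x, ∑ a, πh x a = 1)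
    -- stationary distribution of π
    (μ : X → ℝ) (hμnn : ∀ x, 0 ≤ μ x) (hμsum : ∑ x, μ x = 1)
    (hstat : ∀ x', ∑ x, ∑ a, μ x * π x a * P x a x' = μ x')
    (lam : ℝ) (hlam : lam = ∑ x, ∑ a, μ x * π x a * r x a)
    -- Bellman equations for π̂
    (lamh : ℝ) (Qh : X → A → ℝ) (Vh : X → ℝ)
    (hQ : ∀ x a, Qh x a = r x a - lamh + ∑ x', P x a x' * Vh x')
    (hV : ∀ x, Vh x = ∑ a, πh x a * Qh x a) :
    lam - lamh = ∑ x, ∑ a, μ x * (π x a - πh x a) * Qh x a := by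
  have hC : ∑ x, ∑ a, ∑ x', μ x * π x a * P x a x' * Vh x'
      = ∑ x', μ x' * Vh x' := by
    have h1 : ∑ x, ∑ a, ∑ x', μ x * π x a * P x a x' * Vh x'
        = ∑ x', (∑ x, ∑ a, μ x * π x a * P x a x') * Vh x' := by
      calc ∑ x, ∑ a, ∑ x', μ x * π x a * P x a x' * Vh x'
          = ∑ x, ∑ x', ∑ a, μ x * π x a * P x a x' * Vh x' :=
            Finset.sum_congr rfl fun x _ => Finset.sum_comm
        _ = ∑ x', ∑ x, ∑ a, μ x * π x a * P x a x' * Vh x' :=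
            Finset.sum_comm
        _ = ∑ x', (∑ x, ∑ a, μ x * π x a * P x a x') * Vh x' := by
            simp [Finset.sum_mul]
    rw [h1]
    exact Finset.sum_congr rfl fun x' _ => by rw [hstat]
  have hB : ∑ x, ∑ a, μ x * π x a * lamh = lamh := by
    have h : ∀ x, ∑ a, μ x * π x a * lamh = μ x * lamh := fun x => by
      rw [← Finset.sum_mul, ← Finset.mul_sum, hπsum, mul_one]
    simp only [h, ← Finset.sum_mul, hμsum, one_mul]
  have hπQ : ∑ x, ∑ a, μ x * π x a * Qh x a
      = lam - lamh + ∑ x', μ x' * Vh x' := by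
    have h : ∀ x a, μ x * π x a * Qh x a
        = μ x * π x a * r x a - μ x * π x a * lamh
          + ∑ x', μ x * π x a * P x a x' * Vh x' := by
      intro x a
      rw [hQ x a, mul_add, mul_sub, Finset.mul_sum]
      simp only [mul_assoc]
    simp only [h, Finset.sum_add_distrib, Finset.sum_sub_distrib]
    rw [← hlam, hB, hC]
  have hπhQ : ∑ x, ∑ a, μ x * πh x a * Qh x a = ∑ x, μ x * Vh x := by
    refine Finset.sum_congr rfl fun x _ => ?_
    rw [hV x, Finset.mul_sum]
    exact Finset.sum_congr rfl fun a _ => by ring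
  have hsplit : ∑ x, ∑ a, μ x * (π x a - πh x a) * Qh x a
      = (∑ x, ∑ a, μ x * π x a * Qh x a) - ∑ x, ∑ a, μ x * πh x a * Qh x a := by
    rw [← Finset.sum_sub_distrib]
    refine Finset.sum_congr rfl fun x _ => ?_
    rw [← Finset.sum_sub_distrib]
    exact Finset.sum_congr rfl fun a _ => by ring
  rw [hsplit, hπQ, hπhQ]
  ring
end

section
/- Let X and A be nonempty finite sets, let P : X × A → (X → ℝ) be a transition kernel (P(x'|x,a) ≥ 0 and Σ_{x'} P(x'|x,a) = 1), and let r : X × A → ℝ with 0 ≤ r(x,a) ≤ 1 for all x, a. Let π be a policy (π(a|x) ≥ 0, Σ_a π(a|x) = 1) with induced transition matrix P^π(x,x') = Σ_a π(a|x)·P(x'|x,a) and induced reward r_π(x) = Σ_a π(a|x)·r(x,a). Let τ > 0 and suppose the contraction condition holds: for any two probability distributions μ, μ' on X, Σ_{x'} |Σ_x (μ(x) − μ'(x))·P^π(x,x')| ≤ exp(−1/τ)·Σ_x |μ(x) − μ'(x)|. Let μ_π be a probability distribution on X stationary for P^π (μ_π P^π = μ_π), set λ = Σ_x μ_π(x)·r_π(x),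 and define V(x) = Σ_{t=0}^∞ (((P^π)^t r_π)(x) − λ) (the series converges absolutely under the contraction condition) and Q(x,a) = r(x,a) − λ + Σ_{x'} P(x'|x,a)·V(x'). Then |Q(x,a)| ≤ 2τ + 3 for every state-action pair (x, a). -/
/-!
Under the contraction condition the `t`-step distribution `(Pπ ^ t) x` is within `ℓ¹`-distance
`2 q ^ t` of the stationary distribution, where `q = exp (-1 / τ)`. Since `0 ≤ rπ ≤ 1`, the `t`-th
term of the series defining `V x` is then at most `2 q ^ t` in absolute value, so
`|V x| ≤ 2 / (1 - q) ≤ 2 τ + 2` by `exp (1 / τ) ≥ 1 + 1 / τ`. Finally `Q x a` is `r x a - λ`, which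
lies in `[-1, 1]`, plus an average of values of `V`.
-/

open Finset Matrix

lemma exp_neg_inv_lt_one {τ : ℝ} (hτ : 0 < τ) : Real.exp (-1 / τ) < 1 :=
  Real.exp_lt_one_iff.2 (div_neg_of_neg_of_pos (by norm_num) hτ)

lemma inv_one_sub_exp_neg_inv_le {τ : ℝ} (hτ : 0 < τ) : (1 - Real.exp (-1 / τ))⁻¹ ≤ τ + 1 := by
  have hexp : Real.exp (-1 / τ) * (1 / τ + 1) ≤ 1 := by
    calc Real.exp (-1 / τ) * (1 / τ + 1) ≤ Real.exp (-1 / τ) * Real.exp (1 / τ) := by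
          gcongr; exact Real.add_one_le_exp _
      _ = 1 := by rw [← Real.exp_add, neg_div, neg_add_cancel, Real.exp_zero]
  have hmul : Real.exp (-1 / τ) * (1 / τ + 1) * τ = Real.exp (-1 / τ) * (1 + τ) := by field_simp
  rw [inv_le_iff_one_le_mul₀ (by linarith [exp_neg_inv_lt_one hτ])]
  nlinarith

lemma Convex.sum_mem_of_mem_stdSimplex {ι E : Type*} [Fintype ι] [AddCommGroup E] [Module ℝ E]
    {s : Set E} (hs : Convex ℝ s) {w : ι → ℝ} (hw : w ∈ stdSimplex ℝ ι) {z : ι → E}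
    (hz : ∀ i, z i ∈ s) : ∑ i, w i • z i ∈ s :=
  hs.sum_mem (fun i _ => hw.1 i) hw.2 fun i _ => hz i

lemma sum_abs_sub_le_two {ι : Type*} [Fintype ι] {p p' : ι → ℝ} (hp : p ∈ stdSimplex ℝ ι)
    (hp' : p' ∈ stdSimplex ℝ ι) : ∑ i, |p i - p' i| ≤ 2 := by
  calc ∑ i, |p i - p' i| ≤ ∑ i, (p i + p' i) :=
        sum_le_sum fun i _ => (abs_sub _ _).trans_eq <| by
          rw [abs_of_nonneg (hp.1 i), abs_of_nonneg (hp'.1 i)]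
    _ = 2 := by rw [sum_add_distrib, hp.2, hp'.2]; norm_num

namespace Matrix

variable {n : Type*} [Fintype n] [DecidableEq n]

lemma mem_rowStochastic_iff_row_mem_stdSimplex {M : Matrix n n ℝ} :
    M ∈ rowStochastic ℝ n ↔ ∀ i, M i ∈ stdSimplex ℝ n := by
  rw [mem_rowStochastic_iff_sum]
  exact ⟨fun h i => ⟨h.1 i, h.2 i⟩, fun h => ⟨fun i => (h i).1, fun i => (h i).2⟩⟩

def IsL1Contraction (M : Matrix n n ℝ) (q : ℝ) : Prop :=
  ∀ p ∈ stdSimplex ℝ n, ∀ p' ∈ stdSimplex ℝ n,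
    ∑ j, |∑ i, (p i - p' i) * M i j| ≤ q * ∑ i, |p i - p' i|

variable {M : Matrix n n ℝ} {μ : n → ℝ} {q : ℝ}

lemma IsL1Contraction.sum_abs_pow_sub_le (hcontr : M.IsL1Contraction q) (hq : 0 ≤ q)
    (hM : M ∈ rowStochastic ℝ n) (hμ : μ ∈ stdSimplex ℝ n) (hstat : μ ᵥ* M = μ) (i : n) (t : ℕ) :
    ∑ j, |(M ^ t) i j - μ j| ≤ 2 * q ^ t := by
  have hrow (t : ℕ) : (M ^ t) i ∈ stdSimplex ℝ n :=
    mem_rowStochastic_iff_row_mem_stdSimplex.1 (pow_mem hM t) i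
  induction t with
  | zero => simpa using sum_abs_sub_le_two (hrow 0) hμ
  | succ t ih =>
    have hstep (j : n) : (M ^ (t + 1)) i j - μ j = ∑ k, ((M ^ t) i k - μ k) * M k j := by
      rw [pow_succ, mul_apply, ← congrFun hstat j]
      simp only [sub_mul, sum_sub_distrib, vecMul, dotProduct]
    calc ∑ j, |(M ^ (t + 1)) i j - μ j| = ∑ j, |∑ k, ((M ^ t) i k - μ k) * M k j| := by
          simp only [hstep]
      _ ≤ q * ∑ k, |(M ^ t) i k - μ k| := hcontr _ (hrow t) _ hμ
      _ ≤ q * (2 * q ^ t) := by gcongr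
      _ = 2 * q ^ (t + 1) := by ring

lemma IsL1Contraction.abs_pow_mulVec_sub_le (hcontr : M.IsL1Contraction q) (hq : 0 ≤ q)
    (hM : M ∈ rowStochastic ℝ n) (hμ : μ ∈ stdSimplex ℝ n) (hstat : μ ᵥ* M = μ) {f : n → ℝ}
    (hf : ∀ j, |f j| ≤ 1) (i : n) (t : ℕ) : |(M ^ t *ᵥ f) i - μ ⬝ᵥ f| ≤ 2 * q ^ t := by
  have hdiff : (M ^ t *ᵥ f) i - μ ⬝ᵥ f = ∑ j, ((M ^ t) i j - μ j) * f j := by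
    simp only [mulVec, dotProduct, sub_mul, sum_sub_distrib]
  calc |(M ^ t *ᵥ f) i - μ ⬝ᵥ f| ≤ ∑ j, |((M ^ t) i j - μ j) * f j| :=
        hdiff ▸ abs_sum_le_sum_abs _ _
    _ ≤ ∑ j, |(M ^ t) i j - μ j| := sum_le_sum fun j _ => by
        rw [abs_mul]; exact mul_le_of_le_one_right (abs_nonneg _) (hf j)
    _ ≤ 2 * q ^ t := hcontr.sum_abs_pow_sub_le hq hM hμ hstat i t

lemma IsL1Contraction.abs_tsum_pow_mulVec_sub_le (hcontr : M.IsL1Contraction q) (hq : 0 ≤ q)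
    (hq1 : q < 1) (hM : M ∈ rowStochastic ℝ n) (hμ : μ ∈ stdSimplex ℝ n) (hstat : μ ᵥ* M = μ)
    {f : n → ℝ} (hf : ∀ j, |f j| ≤ 1) (i : n) :
    |∑' t : ℕ, ((M ^ t *ᵥ f) i - μ ⬝ᵥ f)| ≤ 2 * (1 - q)⁻¹ :=
  tsum_of_norm_bounded ((hasSum_geometric_of_lt_one hq hq1).mul_left 2)
    (f := fun t : ℕ => (M ^ t *ᵥ f) i - μ ⬝ᵥ f) (hcontr.abs_pow_mulVec_sub_le hq hM hμ hstat hf i)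

end Matrix

theorem stmt6_general (X A : Type*) [Fintype X] [DecidableEq X] [Fintype A]
    -- transition kernel
    (P : X → A → X → ℝ)
    (hPnn : ∀ x a x', 0 ≤ P x a x') (hPsum : ∀ x a, ∑ x', P x a x' = 1)
    -- reward in [0,1]
    (r : X → A → ℝ) (hr0 : ∀ x a, 0 ≤ r x a) (hr1 : ∀ x a, r x a ≤ 1)
    -- policy and its induced transition matrix and reward
    (π : X → A → ℝ)
    (hπnn : ∀ x a, 0 ≤ π x a) (hπsum : ∀ x, ∑ a, π x a = 1)
    (Pπ : Matrix X X ℝ) (hPπ : ∀ x x', Pπ x x' = ∑ a, π x a * P x a x')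
    (rπ : X → ℝ) (hrπ : ∀ x, rπ x = ∑ a, π x a * r x a)
    -- contraction condition with parameter τ
    (τ : ℝ) (hτ : 0 < τ)
    (hcontr : ∀ μ μ' : X → ℝ, (∀ x, 0 ≤ μ x) → (∑ x, μ x = 1) →
      (∀ x, 0 ≤ μ' x) → (∑ x, μ' x = 1) →
      ∑ x', |∑ x, (μ x - μ' x) * Pπ x x'| ≤ Real.exp (-1 / τ) * ∑ x, |μ x - μ' x|)
    -- stationary distribution and average reward
    (μπ : X → ℝ) (hμnn : ∀ x, 0 ≤ μπ x) (hμsum : ∑ x, μπ x = 1)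
    (hstat : ∀ x', ∑ x, μπ x * Pπ x x' = μπ x')
    (lam : ℝ) (hlam : lam = ∑ x, μπ x * rπ x)
    -- value functions
    (V : X → ℝ) (hV : ∀ x, V x = ∑' t : ℕ, ((Pπ ^ t).mulVec rπ x - lam))
    (Q : X → A → ℝ)
    (hQ : ∀ x a, Q x a = r x a - lam + ∑ x', P x a x' * V x') :
    ∀ x a, |Q x a| ≤ 2 * τ + 3 := by
  intro x a
  have hM : Pπ ∈ rowStochastic ℝ X := mem_rowStochastic_iff_row_mem_stdSimplex.2 fun y => by
    have hrow : Pπ y = ∑ a, π y a • P y a := by ext; simp [hPπ]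
    exact hrow ▸ (convex_stdSimplex ℝ X).sum_mem_of_mem_stdSimplex ⟨hπnn y, hπsum y⟩
      fun a => ⟨hPnn y a, hPsum y a⟩
  have hμ : μπ ∈ stdSimplex ℝ X := ⟨hμnn, hμsum⟩
  have hrπ_mem (y : X) : rπ y ∈ Set.Icc 0 1 := hrπ y ▸
    (convex_Icc 0 1).sum_mem_of_mem_stdSimplex ⟨hπnn y, hπsum y⟩ fun a => ⟨hr0 y a, hr1 y a⟩
  have hlam_mem : lam ∈ Set.Icc 0 1 :=
    hlam ▸ (convex_Icc 0 1).sum_mem_of_mem_stdSimplex hμ hrπ_mem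
  have hV_le (y : X) : |V y| ≤ 2 * τ + 2 := by
    have hrπ_abs (z : X) : |rπ z| ≤ 1 := abs_le.2 ⟨by linarith [(hrπ_mem z).1], (hrπ_mem z).2⟩
    have hcontr' : Pπ.IsL1Contraction (Real.exp (-1 / τ)) :=
      fun p hp p' hp' => hcontr p p' hp.1 hp.2 hp'.1 hp'.2
    calc |V y| ≤ 2 * (1 - Real.exp (-1 / τ))⁻¹ := by
          rw [hV y, hlam]
          exact hcontr'.abs_tsum_pow_mulVec_sub_le (Real.exp_pos _).le (exp_neg_inv_lt_one hτ)
            hM hμ (funext hstat) hrπ_abs y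
      _ ≤ 2 * (τ + 1) := by gcongr; exact inv_one_sub_exp_neg_inv_le hτ
      _ = 2 * τ + 2 := by ring
  have hPV : ∑ x', P x a x' * V x' ∈ Set.Icc (-(2 * τ + 2)) (2 * τ + 2) :=
    (convex_Icc _ _).sum_mem_of_mem_stdSimplex ⟨hPnn x a, hPsum x a⟩ fun y => abs_le.1 (hV_le y)
  rw [hQ, abs_le]
  constructor <;> linarith [hPV.1, hPV.2, hlam_mem.1, hlam_mem.2, hr0 x a, hr1 x a]

/-- The average-reward state-action value function of a policy in a fast-mixing
MDP with rewards in [0,1] is bounded by `2τ + 3`. -/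
theorem stmt6 (X A : Type*) [Fintype X] [DecidableEq X] [Fintype A]
    [Nonempty X] [Nonempty A]
    -- transition kernel
    (P : X → A → X → ℝ)
    (hPnn : ∀ x a x', 0 ≤ P x a x') (hPsum : ∀ x a, ∑ x', P x a x' = 1)
    -- reward in [0,1]
    (r : X → A → ℝ) (hr0 : ∀ x a, 0 ≤ r x a) (hr1 : ∀ x a, r x a ≤ 1)
    -- policy and its induced transition matrix and reward
    (π : X → A → ℝ)
    (hπnn : ∀ x a, 0 ≤ π x a) (hπsum : ∀ x, ∑ a, π x a = 1)
    (Pπ : Matrix X X ℝ) (hPπ : ∀ x x', Pπ x x' = ∑ a, π x a * P x a x')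
    (rπ : X → ℝ) (hrπ : ∀ x, rπ x = ∑ a, π x a * r x a)
    -- contraction condition with parameter τ
    (τ : ℝ) (hτ : 0 < τ)
    (hcontr : ∀ μ μ' : X → ℝ, (∀ x, 0 ≤ μ x) → (∑ x, μ x = 1) →
      (∀ x, 0 ≤ μ' x) → (∑ x, μ' x = 1) →
      ∑ x', |∑ x, (μ x - μ' x) * Pπ x x'| ≤ Real.exp (-1 / τ) * ∑ x, |μ x - μ' x|)
    -- stationary distribution and average reward
    (μπ : X → ℝ) (hμnn : ∀ x, 0 ≤ μπ x) (hμsum : ∑ x, μπ x = 1)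
    (hstat : ∀ x', ∑ x, μπ x * Pπ x x' = μπ x')
    (lam : ℝ) (hlam : lam = ∑ x, μπ x * rπ x)
    -- value functions
    (V : X → ℝ) (hV : ∀ x, V x = ∑' t : ℕ, ((Pπ ^ t).mulVec rπ x - lam))
    (Q : X → A → ℝ)
    (hQ : ∀ x a, Q x a = r x a - lam + ∑ x', P x a x' * V x') :
    ∀ x a, |Q x a| ≤ 2 * τ + 3 :=
  stmt6_general X A P hPnn hPsum r hr0 hr1 π hπnn hπsum Pπ hPπ rπ hrπ τ hτ hcontr μπ hμnn hμsum
    hstat lam hlam V hV Q hQ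
end

section
/- Let X and A be nonempty finite sets, let P : X × A → (X → ℝ) be a transition kernel (P(x'|x,a) ≥ 0 and Σ_{x'} P(x'|x,a) = 1), and let r : X × A → ℝ. Let π and π̂ be policies (π(a|x) ≥ 0, Σ_a π(a|x) = 1, and similarly for π̂). Let μ : X → ℝ be a probability distribution stationary for π (Σ_{x,a} μ(x)·π(a|x)·P(x'|x,a) = μ(x') for all x'), and set λ = Σ_{x,a} μ(x)·π(a|x)·r(x,a). Suppose λ̂ ∈ ℝ and Q̂, V̂ satisfy the Bellman equations for π̂ (Q̂(x,a) = r(x,a) − λ̂ + Σ_{x'} P(x'|x,a)·V̂(x') and V̂(x) = Σ_a π̂(a|x)·Q̂(x,a)), and that |Q̂(x,a)| ≤ B for all (x, a) and some B ≥ 0. Then |λ − λ̂| ≤ B · max_{x∈X} Σ_{a∈A} |π(a|x) − π̂(a|x)|. -/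
/-- The difference in average rewards of two policies is bounded by the uniform
bound on the state-action value function times the maximal per-state ℓ1-distance
between the policies. -/
theorem stmt7 (X A : Type*) [Fintype X] [Fintype A] [Nonempty X] [Nonempty A]
    -- transition kernel
    (P : X → A → X → ℝ)
    (hPnn : ∀ x a x', 0 ≤ P x a x') (hPsum : ∀ x a, ∑ x', P x a x' = 1)
    -- reward
    (r : X → A → ℝ)
    -- policies π and π̂
    (π πh : X → A → ℝ)
    (hπnn : ∀ x a, 0 ≤ π x a) (hπsum : ∀ x, ∑ a, π x a = 1)
    (hπhnn : ∀ x a, 0 ≤ πh x a) (hπhsum : ∀ x, ∑ a, πh x a = 1)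
    -- stationary distribution of π and its average reward
    (μ : X → ℝ) (hμnn : ∀ x, 0 ≤ μ x) (hμsum : ∑ x, μ x = 1)
    (hstat : ∀ x', ∑ x, ∑ a, μ x * π x a * P x a x' = μ x')
    (lam : ℝ) (hlam : lam = ∑ x, ∑ a, μ x * π x a * r x a)
    -- Bellman equations for π̂
    (lamh : ℝ) (Qh : X → A → ℝ) (Vh : X → ℝ)
    (hQ : ∀ x a, Qh x a = r x a - lamh + ∑ x', P x a x' * Vh x')
    (hV : ∀ x, Vh x = ∑ a, πh x a * Qh x a)
    -- uniform bound on Q̂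
    (B : ℝ) (hB : 0 ≤ B) (hQbound : ∀ x a, |Qh x a| ≤ B) :
    |lam - lamh|
      ≤ B * Finset.univ.sup' Finset.univ_nonempty
          (fun x : X => ∑ a, |π x a - πh x a|) := by
  set M := Finset.univ.sup' Finset.univ_nonempty
      (fun x : X => ∑ a, |π x a - πh x a|) with hMdef
  have hr : ∀ x a, r x a = Qh x a + lamh - ∑ x', P x a x' * Vh x' := by
    intro x a; have := hQ x a; linarith
  have hA : ∑ x, ∑ a, μ x * π x a = 1 := by
    have : ∀ x, ∑ a, μ x * π x a = μ x := by
      intro x; rw [← Finset.mul_sum, hπsum, mul_one]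
    simp_rw [this]; exact hμsum
  have hB2 : ∑ x, ∑ a, μ x * π x a * ∑ x', P x a x' * Vh x'
      = ∑ x', μ x' * Vh x' := by
    have e : ∀ x a, μ x * π x a * ∑ x', P x a x' * Vh x'
        = ∑ x', μ x * π x a * P x a x' * Vh x' := by
      intro x a; rw [Finset.mul_sum]
      exact Finset.sum_congr rfl fun _ _ => by ring
    have step1 : ∑ x, ∑ a, μ x * π x a * ∑ x', P x a x' * Vh x'
        = ∑ x', ∑ x, ∑ a, μ x * π x a * P x a x' * Vh x' := by
      simp_rw [e]
      rw [show (∑ x, ∑ a, ∑ x', μ x * π x a * P x a x' * Vh x')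
          = ∑ x, ∑ x', ∑ a, μ x * π x a * P x a x' * Vh x' from
        Finset.sum_congr rfl fun x _ => Finset.sum_comm]
      exact Finset.sum_comm

    rw [step1]
    apply Finset.sum_congr rfl; intro x' _
    have : ∑ x, ∑ a, μ x * π x a * P x a x' * Vh x'
        = (∑ x, ∑ a, μ x * π x a * P x a x') * Vh x' := by
      rw [Finset.sum_mul]
      apply Finset.sum_congr rfl; intro x _
      rw [Finset.sum_mul]
    rw [this, hstat]
  have key : lam - lamh = ∑ x, μ x * ∑ a, (π x a - πh x a) * Qh x a := by
    have hlam' : lam = (∑ x, ∑ a, μ x * π x a * Qh x a) + lamh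
        - ∑ x', μ x' * Vh x' := by
      rw [hlam]
      have : ∀ x a, μ x * π x a * r x a
          = μ x * π x a * Qh x a + lamh * (μ x * π x a)
            - μ x * π x a * ∑ x', P x a x' * Vh x' := by
        intro x a; rw [hr x a]; ring
      have hA' : ∑ x, μ x * ∑ a, π x a = 1 := by
        simp_rw [hπsum, mul_one]; exact hμsum
      simp_rw [this, Finset.sum_sub_distrib, Finset.sum_add_distrib,
        ← Finset.mul_sum]
      rw [hA', hB2]; ring
    have hμV : ∑ x', μ x' * Vh x' = ∑ x, μ x * ∑ a, πh x a * Qh x a := by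
      apply Finset.sum_congr rfl; intro x _; rw [hV]
    rw [hlam', hμV]
    have : ∀ x, μ x * ∑ a, (π x a - πh x a) * Qh x a
        = (∑ a, μ x * π x a * Qh x a) - μ x * ∑ a, πh x a * Qh x a := by
      intro x
      rw [Finset.mul_sum, Finset.mul_sum, ← Finset.sum_sub_distrib]
      exact Finset.sum_congr rfl fun a _ => by ring
    simp_rw [this, Finset.sum_sub_distrib]
    ring
  have hM : ∀ x : X, ∑ a, |π x a - πh x a| ≤ M :=
    fun x => Finset.le_sup' (fun x : X => ∑ a, |π x a - πh x a|) (Finset.mem_univ x)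
  rw [key]
  calc |∑ x, μ x * ∑ a, (π x a - πh x a) * Qh x a|
      ≤ ∑ x, |μ x * ∑ a, (π x a - πh x a) * Qh x a| :=
        Finset.abs_sum_le_sum_abs _ _
    _ ≤ ∑ x, μ x * (B * M) := by
        apply Finset.sum_le_sum; intro x _
        rw [abs_mul, abs_of_nonneg (hμnn x)]
        apply mul_le_mul_of_nonneg_left _ (hμnn x)
        calc |∑ a, (π x a - πh x a) * Qh x a|
            ≤ ∑ a, |(π x a - πh x a) * Qh x a| := Finset.abs_sum_le_sum_abs _ _
          _ ≤ ∑ a, |π x a - πh x a| * B := by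
              apply Finset.sum_le_sum; intro a _
              rw [abs_mul]
              exact mul_le_mul_of_nonneg_left (hQbound x a) (abs_nonneg _)
          _ = B * ∑ a, |π x a - πh x a| := by rw [← Finset.sum_mul]; ring
          _ ≤ B * M := mul_le_mul_of_nonneg_left (hM x) hB
    _ = B * M := by rw [← Finset.sum_mul, hμsum, one_mul]
end

section
/- Let X be a nonempty finite set, and let P, Q : X × X → ℝ be row-stochastic matrices (all entries nonnegative and every row sums to 1). Let r : X → ℝ with |r(x)| ≤ 1 for all x. Then for every natural number t: max_{x∈X} |(P^t r)(x) − (Q^t r)(x)| ≤ t · max_{x∈X} Σ_{x'∈X} |P(x,x') − Q(x,x')|, where P^t denotes the t-th matrix power and (P^t r)(x) = Σ_{x'} (P^t)(x,x')·r(x'). -/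
/-!
The right-hand side is `t * ‖P - Q‖` for the `L∞` operator norm on matrices, the maximal row
`ℓ¹`-sum, in which row-stochastic matrices have norm at most `1`. For elements `a`, `b` of norm at
most `1` in a normed ring, `a ^ (n + 1) - b ^ (n + 1) = a * (a ^ n - b ^ n) + (a - b) * b ^ n`
gives `‖a ^ t - b ^ t‖ ≤ t * ‖a - b‖` by induction.
-/

open Finset Matrix

theorem norm_pow_sub_pow_le_mul_norm_sub {R : Type*} [SeminormedRing R] [NormOneClass R]
    {a b : R} (ha : ‖a‖ ≤ 1) (hb : ‖b‖ ≤ 1) : ∀ n : ℕ, ‖a ^ n - b ^ n‖ ≤ n * ‖a - b‖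
  | 0 => by simp
  | n + 1 => by
    have hbn : ‖b ^ n‖ ≤ 1 := (norm_pow_le b n).trans (pow_le_one₀ (norm_nonneg b) hb)
    calc ‖a ^ (n + 1) - b ^ (n + 1)‖ = ‖a * (a ^ n - b ^ n) + (a - b) * b ^ n‖ := by
          rw [pow_succ', pow_succ']; noncomm_ring
      _ ≤ ‖a‖ * ‖a ^ n - b ^ n‖ + ‖a - b‖ * ‖b ^ n‖ :=
          norm_add_le_of_le (norm_mul_le _ _) (norm_mul_le _ _)
      _ ≤ 1 * (n * ‖a - b‖) + ‖a - b‖ * 1 := by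
          gcongr
          exact norm_pow_sub_pow_le_mul_norm_sub ha hb n
      _ = (n + 1 : ℕ) * ‖a - b‖ := by push_cast; ring

namespace Matrix

open scoped Matrix.Norms.Operator

variable {m n : Type*} [Fintype m] [Fintype n]

theorem linfty_opNorm_eq_sup'_sum_norm {α : Type*} [SeminormedAddCommGroup α] [Nonempty m]
    (A : Matrix m n α) : ‖A‖ = univ.sup' univ_nonempty fun i => ∑ j, ‖A i j‖ := by
  rw [linfty_opNorm_def, ← sup'_eq_sup univ_nonempty,
    apply_sup'_eq_sup'_comp _ _ NNReal.coe_max]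
  simp [Function.comp_def]

theorem linfty_opNorm_le_one_of_mem_rowStochastic [DecidableEq n] {M : Matrix n n ℝ}
    (hM : M ∈ rowStochastic ℝ n) : ‖M‖ ≤ 1 := by
  have hM' : ‖M‖₊ ≤ 1 := by
    rw [linfty_opNNNorm_def]
    refine Finset.sup_le fun i _ => ?_
    rw [← NNReal.coe_le_coe]
    push_cast
    simp_rw [Real.norm_of_nonneg (nonneg_of_mem_rowStochastic hM)]
    exact (sum_row_of_mem_rowStochastic hM i).le
  exact_mod_cast hM'

theorem norm_pow_mulVec_sub_pow_mulVec_le [DecidableEq n] [Nonempty n] {P Q : Matrix n n ℝ}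
    (hP : P ∈ rowStochastic ℝ n) (hQ : Q ∈ rowStochastic ℝ n) (r : n → ℝ) (t : ℕ) :
    ‖P ^ t *ᵥ r - Q ^ t *ᵥ r‖ ≤ t * ‖P - Q‖ * ‖r‖ := by
  rw [← sub_mulVec]
  exact (linfty_opNorm_mulVec _ _).trans <| by
    gcongr
    exact norm_pow_sub_pow_le_mul_norm_sub (linfty_opNorm_le_one_of_mem_rowStochastic hP)
      (linfty_opNorm_le_one_of_mem_rowStochastic hQ) t

end Matrix

/-- The sup-norm difference between applying `t` steps of two Markov chains to a
bounded function is at most `t` times the maximal ℓ1-distance between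
corresponding rows of the two transition matrices. -/
theorem stmt9 (X : Type*) [Fintype X] [DecidableEq X] [Nonempty X]
    (P Q : Matrix X X ℝ)
    (hPnn : ∀ x x', 0 ≤ P x x') (hPsum : ∀ x, ∑ x', P x x' = 1)
    (hQnn : ∀ x x', 0 ≤ Q x x') (hQsum : ∀ x, ∑ x', Q x x' = 1)
    (r : X → ℝ) (hr : ∀ x, |r x| ≤ 1) (t : ℕ) :
    Finset.univ.sup' Finset.univ_nonempty
        (fun x : X => |(P ^ t).mulVec r x - (Q ^ t).mulVec r x|)
      ≤ (t : ℝ) * Finset.univ.sup' Finset.univ_nonempty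
          (fun x : X => ∑ x', |P x x' - Q x x'|) := by
  have hP : P ∈ rowStochastic ℝ X := mem_rowStochastic_iff_sum.2 ⟨hPnn, hPsum⟩
  have hQ : Q ∈ rowStochastic ℝ X := mem_rowStochastic_iff_sum.2 ⟨hQnn, hQsum⟩
  have hr' : ‖r‖ ≤ 1 := (pi_norm_le_iff_of_nonneg zero_le_one).2 hr
  refine sup'_le _ _ fun x _ => ?_
  open scoped Matrix.Norms.Operator in
  calc |(P ^ t *ᵥ r) x - (Q ^ t *ᵥ r) x| ≤ ‖P ^ t *ᵥ r - Q ^ t *ᵥ r‖ :=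
      (Real.norm_eq_abs _).symm.trans_le (norm_le_pi_norm (P ^ t *ᵥ r - Q ^ t *ᵥ r) x)
    _ ≤ t * ‖P - Q‖ * ‖r‖ := norm_pow_mulVec_sub_pow_mulVec_le hP hQ r t
    _ ≤ t * ‖P - Q‖ := mul_le_of_le_one_right (by positivity) hr'
    _ = t * univ.sup' univ_nonempty fun x => ∑ x', |P x x' - Q x x'| := by
      rw [linfty_opNorm_eq_sup'_sum_norm]
      rfl
end

section
/- Let X and A be nonempty finite sets and d ≥ 1 an integer. Let φ : X × A → ℝ^d be a feature map with Euclidean norms bounded by C_Ψ (‖φ(x,a)‖₂ ≤ C_Ψ for all x, a). Let ν : X × A → ℝ be a probability distribution (ν(x,a) ≥ 0, Σ_{x,a} ν(x,a) = 1) satisfying the uniform feature excitation condition: there exists σ > 0 such that for every v ∈ ℝ^d, Σ_{x,a} ν(x,a)·⟨φ(x,a), v⟩² ≥ σ·‖v‖₂². Then for any w, ŵ ∈ ℝ^d, the linear functions Q(x,a) = ⟨φ(x,a), w⟩ and Q̂(x,a) = ⟨φ(x,a), ŵ⟩ satisfy, for every (x, a) ∈ X × A: |Q̂(x,a) − Q(x,a)|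 ≤ (C_Ψ/√σ) · √(Σ_{x',a'} ν(x',a')·(Q̂(x',a') − Q(x',a'))²). -/
/-- Under uniform feature excitation, a ν-weighted ℓ2-norm error bound between
two linear value functions yields a pointwise (ℓ∞) error bound. -/
theorem stmt13 (X A : Type*) [Fintype X] [Fintype A] [Nonempty X] [Nonempty A]
    (d : ℕ) (hd : 1 ≤ d)
    -- feature map with bounded Euclidean norms
    (φ : X → A → EuclideanSpace ℝ (Fin d))
    (CΨ : ℝ) (hC : ∀ x a, ‖φ x a‖ ≤ CΨ)
    -- probability distribution ν on X × A
    (ν : X → A → ℝ)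
    (hνnn : ∀ x a, 0 ≤ ν x a) (hνsum : ∑ x, ∑ a, ν x a = 1)
    -- uniform feature excitation
    (σ : ℝ) (hσ : 0 < σ)
    (hexc : ∀ v : EuclideanSpace ℝ (Fin d),
      σ * ‖v‖ ^ 2 ≤ ∑ x, ∑ a, ν x a * (inner ℝ (φ x a) v : ℝ) ^ 2)
    -- linear value functions
    (w wh : EuclideanSpace ℝ (Fin d))
    (Q Qh : X → A → ℝ)
    (hQ : ∀ x a, Q x a = (inner ℝ (φ x a) w : ℝ))
    (hQh : ∀ x a, Qh x a = (inner ℝ (φ x a) wh : ℝ)) :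
    ∀ (x : X) (a : A), |Qh x a - Q x a|
      ≤ (CΨ / Real.sqrt σ)
          * Real.sqrt (∑ x', ∑ a', ν x' a' * (Qh x' a' - Q x' a') ^ 2) := by
  intro x a
  set v : EuclideanSpace ℝ (Fin d) := wh - w with hv
  have hdiff : ∀ x a, Qh x a - Q x a = (inner ℝ (φ x a) v : ℝ) := by
    intro x a
    simp [hQ, hQh, hv, inner_sub_right]
  set S : ℝ := ∑ x', ∑ a', ν x' a' * (Qh x' a' - Q x' a') ^ 2 with hS
  have hSeq : σ * ‖v‖ ^ 2 ≤ S := by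
    have := hexc v
    calc σ * ‖v‖ ^ 2 ≤ ∑ x, ∑ a, ν x a * (inner ℝ (φ x a) v : ℝ) ^ 2 := this
      _ = S := by simp [hS, hdiff]
  have hSnn : 0 ≤ S := le_trans (by positivity) hSeq
  have hvnorm : ‖v‖ ≤ Real.sqrt S / Real.sqrt σ := by
    rw [← Real.sqrt_sq (norm_nonneg v), div_eq_mul_inv, ← Real.sqrt_inv,
      ← Real.sqrt_mul hSnn]
    apply Real.sqrt_le_sqrt
    rw [← le_div_iff₀' hσ] at hSeq
    simpa [div_eq_mul_inv] using hSeq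
  have hC0 : 0 ≤ CΨ := le_trans (norm_nonneg _) (hC x a)
  calc |Qh x a - Q x a| = |(inner ℝ (φ x a) v : ℝ)| := by rw [hdiff]
    _ ≤ ‖φ x a‖ * ‖v‖ := by
        simpa using abs_real_inner_le_norm (φ x a) v
    _ ≤ CΨ * (Real.sqrt S / Real.sqrt σ) := by
        apply mul_le_mul (hC x a) hvnorm (norm_nonneg v) hC0
    _ = CΨ / Real.sqrt σ * Real.sqrt S := by ring
end
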